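/- For λ, μ ∈ ℂ*, α, β ∈ ℂ, t, t′ ∈ {±1}: M_t(λ, α) ≅ M_{t′}(μ, β) as 𝒯-modules if and only if λ = μ, α = β and t = t′. Moreover, Π(M_t(λ, α)) is not isomorphic to M_{t′}(μ′, β′) for any μ′ ∈ ℂ*, β′ ∈ ℂ. -/

import Mathlib

/-!
`G_0` acts on `M_t(λ, α)` as multiplication by `∂`, so an even isomorphism commuting with it is
`ℂ[∂²]`-linear on both parity components and agrees on them; being bijective, it is a nonzero
scalar. A scalar intertwines the two actions only if they coincide, and comparing `L_1` on `1`
gives `λ = μ`, `α = β`, while `I_{1/2}` on `1` and on `∂` gives `t = t'`. On `Π(M_t(λ, α))`,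
instead, `G_0` maps the odd part onto the even part, whereas on `M_{t'}(μ', β')` it maps the odd
part into `∂² ℂ[∂²]`, which misses `1`.
-/

open Polynomial

/- `M_t(λ, α) = ℂ[∂²] ⊕ ∂ℂ[∂²]` is encoded as pairs of polynomials.  A fixed global
square-root function `sq` (with `(sq z)² = z`) provides the consistent choice of
`λ^p := (sq λ)^{2p}`; half-integer indices are encoded by their doubles `a = 2p`. -/

noncomputable def MLop (nu α : ℂ) (m : ℤ) (v : Polynomial ℂ × Polynomial ℂ) :
    Polynomial ℂ × Polynomial ℂ :=
  (nu ^ (2 * m) • ((X + C ((m : ℂ) * α)) * v.1.comp (X + C (m : ℂ))),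
   nu ^ (2 * m) • ((X + C ((m : ℂ) * (α + 1/2))) * v.2.comp (X + C (m : ℂ))))

noncomputable def MIop (t nu α : ℂ) (a : ℤ) (v : Polynomial ℂ × Polynomial ℂ) :
    Polynomial ℂ × Polynomial ℂ :=
  ((-2 * t ^ a * nu ^ a * α) • v.1.comp (X + C ((a : ℂ) / 2)),
   (t ^ a * nu ^ a * (1 - 2 * α)) • v.2.comp (X + C ((a : ℂ) / 2)))

noncomputable def MGop (t nu α : ℂ) (a : ℤ) (v : Polynomial ℂ × Polynomial ℂ) :
    Polynomial ℂ × Polynomial ℂ :=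
  (((-t) ^ a * nu ^ a) • ((X + C ((a : ℂ) * α)) * v.2.comp (X + C ((a : ℂ) / 2))),
   (t ^ a * nu ^ a) • v.1.comp (X + C ((a : ℂ) / 2)))

/- `Π(M_t(λ,α))` is encoded as pairs `(a,b)` with even part the odd part of `M`;
the action of an operator on `(a,b)` is the swap of its `M`-action on `(b,a)`. -/
noncomputable def PiLop (nu α : ℂ) (m : ℤ) (v : Polynomial ℂ × Polynomial ℂ) :
    Polynomial ℂ × Polynomial ℂ :=
  ((MLop nu α m (v.2, v.1)).2, (MLop nu α m (v.2, v.1)).1)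

noncomputable def PiIop (t nu α : ℂ) (a : ℤ) (v : Polynomial ℂ × Polynomial ℂ) :
    Polynomial ℂ × Polynomial ℂ :=
  ((MIop t nu α a (v.2, v.1)).2, (MIop t nu α a (v.2, v.1)).1)

noncomputable def PiGop (t nu α : ℂ) (a : ℤ) (v : Polynomial ℂ × Polynomial ℂ) :
    Polynomial ℂ × Polynomial ℂ :=
  ((MGop t nu α a (v.2, v.1)).2, (MGop t nu α a (v.2, v.1)).1)

/-- `e` is an even (parity-preserving) linear bijection. -/
def GradedEquiv (e : (Polynomial ℂ × Polynomial ℂ) ≃ₗ[ℂ] (Polynomial ℂ × Polynomial ℂ)) :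
    Prop :=
  ∀ f : Polynomial ℂ, (e (f, (0 : Polynomial ℂ))).2 = 0 ∧ (e ((0 : Polynomial ℂ), f)).1 = 0

theorem Polynomial.linearMap_apply_eq_mul_map_one {R : Type*} [CommSemiring R]
    (A : R[X] →ₗ[R] R[X]) (hX : ∀ p, A (X * p) = X * A p) (p : R[X]) : A p = p * A 1 := by
  induction p using Polynomial.induction_on with
  | C a => rw [← smul_eq_C_mul, ← map_smul, smul_eq_C_mul, mul_one]
  | add p q hp hq => rw [map_add, hp, hq, add_mul]
  | monomial n a ih =>
    rw [show C a * X ^ (n + 1) = X * (C a * X ^ n) by ring, hX, ih]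
    ring

section Operators

variable (t nu α : ℂ)

theorem MLop_smul (m : ℤ) (c : ℂ) (v : ℂ[X] × ℂ[X]) :
    MLop nu α m (c • v) = c • MLop nu α m v := by
  simp only [MLop, Prod.smul_fst, Prod.smul_snd, smul_comp, mul_smul_comm, smul_comm c,
    Prod.smul_mk]

theorem MIop_smul (a : ℤ) (c : ℂ) (v : ℂ[X] × ℂ[X]) :
    MIop t nu α a (c • v) = c • MIop t nu α a v := by
  simp only [MIop, Prod.smul_fst, Prod.smul_snd, smul_comp, smul_comm c, Prod.smul_mk]

theorem MGop_zero (v : ℂ[X] × ℂ[X]) : MGop t nu α 0 v = (X * v.2, v.1) := by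
  simp [MGop]

theorem PiGop_zero (v : ℂ[X] × ℂ[X]) : PiGop t nu α 0 v = (v.2, X * v.1) := by
  simp [PiGop, MGop]

end Operators

theorem GradedEquiv.apply_fst_eq {e : (ℂ[X] × ℂ[X]) ≃ₗ[ℂ] (ℂ[X] × ℂ[X])} (he : GradedEquiv e)
    (v : ℂ[X] × ℂ[X]) : (e v).1 = (e (v.1, 0)).1 := by
  conv_lhs => rw [← Prod.fst_add_snd v, map_add]
  simp [(he v.2).2]

theorem GradedEquiv.apply_snd_eq {e : (ℂ[X] × ℂ[X]) ≃ₗ[ℂ] (ℂ[X] × ℂ[X])} (he : GradedEquiv e)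
    (v : ℂ[X] × ℂ[X]) : (e v).2 = (e (0, v.2)).2 := by
  conv_lhs => rw [← Prod.fst_add_snd v, map_add]
  simp [(he v.1).1]

theorem GradedEquiv.exists_eq_smul_of_map_MGop_zero
    {e : (ℂ[X] × ℂ[X]) ≃ₗ[ℂ] (ℂ[X] × ℂ[X])} (he : GradedEquiv e) {t nu α t' nu' β : ℂ}
    (hG : ∀ v, e (MGop t nu α 0 v) = MGop t' nu' β 0 (e v)) :
    ∃ c : ℂ, c ≠ 0 ∧ ∀ v, e v = c • v := by
  simp only [MGop_zero] at hG
  set A : ℂ[X] →ₗ[ℂ] ℂ[X] :=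
    LinearMap.fst ℂ ℂ[X] ℂ[X] ∘ₗ e.toLinearMap ∘ₗ LinearMap.inl ℂ ℂ[X] ℂ[X]
  have hA : ∀ f, A f = (e (f, 0)).1 := fun f => rfl
  have hodd : ∀ f, (e (0, f)).2 = A f := fun f => by
    simpa [hA, (he f).1] using congrArg Prod.snd (hG (f, 0))
  have hX : ∀ f, A (X * f) = X * A f := fun f => by
    simpa [hA, hodd] using congrArg Prod.fst (hG (0, f))
  have hmul := linearMap_apply_eq_mul_map_one A hX
  have hunit : IsUnit (A 1) := by
    refine IsUnit.of_mul_eq_one_right (e.symm (1, 0)).1 ?_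
    rw [← hmul, hA, ← he.apply_fst_eq, e.apply_symm_apply]
  obtain ⟨c, hc, hAc⟩ := Polynomial.isUnit_iff.mp hunit
  refine ⟨c, hc.ne_zero, fun v => Prod.ext ?_ ?_⟩
  · rw [he.apply_fst_eq, ← hA, hmul, ← hAc, Prod.smul_fst, smul_eq_C_mul, mul_comm]
  · rw [he.apply_snd_eq, hodd, hmul, ← hAc, Prod.smul_snd, smul_eq_C_mul, mul_comm]

theorem eq_of_map_eq_of_apply_eq_smul {K V : Type*} [Field K] [AddCommGroup V] [Module K V]
    {e f g : V → V} {c : K} (hc : c ≠ 0) (he : ∀ v, e v = c • v) (hg : ∀ v, g (c • v) = c • g v)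
    {v : V} (h : e (f v) = g (e v)) : f v = g v := by
  rw [he, he, hg] at h
  exact smul_right_injective V hc h

theorem eq_of_MLop_one_eq {nu nu' α β : ℂ} (hnu : nu ≠ 0)
    (h : MLop nu α 1 (1, 0) = MLop nu' β 1 (1, 0)) : nu ^ 2 = nu' ^ 2 ∧ α = β := by
  have h1 := congrArg Prod.fst h
  simp only [MLop, mul_one, Int.cast_one, one_mul, one_comp, zpow_ofNat] at h1
  have hlead : nu ^ 2 = nu' ^ 2 := by
    simpa only [coeff_smul, coeff_add, coeff_X_one, coeff_C, if_neg one_ne_zero, add_zero,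
      smul_eq_mul, mul_one] using congrArg (coeff · 1) h1
  have hconst : nu ^ 2 * α = nu' ^ 2 * β := by
    simpa only [coeff_smul, coeff_add, coeff_X_zero, coeff_C_zero, zero_add, smul_eq_mul]
      using congrArg (coeff · 0) h1
  rw [← hlead] at hconst
  exact ⟨hlead, mul_left_cancel₀ (pow_ne_zero 2 hnu) hconst⟩

theorem eq_of_MIop_one_eq {t t' nu α : ℂ} (hnu : nu ≠ 0)
    (heven : MIop t nu α 1 (1, 0) = MIop t' nu α 1 (1, 0))
    (hodd : MIop t nu α 1 (0, 1) = MIop t' nu α 1 (0, 1)) : t = t' := by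
  have h1 := congrArg (fun v => v.1.coeff 0) heven
  have h2 := congrArg (fun v => v.2.coeff 0) hodd
  simp only [MIop, zpow_one, one_comp, zero_comp, coeff_smul, coeff_one_zero, smul_eq_mul,
    mul_one] at h1 h2
  have : nu * t = nu * t' := by linear_combination h2 - h1
  exact mul_left_cancel₀ hnu this

theorem not_exists_gradedEquiv_map_PiGop_zero (t nu α t' nu' β : ℂ) :
    ¬ ∃ e : (ℂ[X] × ℂ[X]) ≃ₗ[ℂ] (ℂ[X] × ℂ[X]),
      GradedEquiv e ∧ ∀ v, e (PiGop t nu α 0 v) = MGop t' nu' β 0 (e v) := by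
  rintro ⟨e, he, hG⟩
  simp only [PiGop_zero, MGop_zero] at hG
  have hX : (e ((e.symm (1, 0)).1, 0)).1 = X * (e (0, (e.symm (1, 0)).1)).2 := by
    simpa using congrArg Prod.fst (hG (0, (e.symm (1, 0)).1))
  rw [← he.apply_fst_eq, e.apply_symm_apply] at hX
  exact Polynomial.not_isUnit_X (IsUnit.of_mul_eq_one _ hX.symm)

theorem stmt11_general (sq : ℂ → ℂ) (hsq : ∀ z : ℂ, (sq z) ^ 2 = z)
    (lam mu : ℂ) (hlam : lam ≠ 0) (α β : ℂ)
    (t t' : ℂ) :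
    ((∃ e : (Polynomial ℂ × Polynomial ℂ) ≃ₗ[ℂ] (Polynomial ℂ × Polynomial ℂ),
        GradedEquiv e ∧
        (∀ (m : ℤ) v, e (MLop (sq lam) α m v) = MLop (sq mu) β m (e v)) ∧
        (∀ a : ℤ, Odd a → ∀ v, e (MIop t (sq lam) α a v) = MIop t' (sq mu) β a (e v)) ∧
        (∀ (a : ℤ) v, e (MGop t (sq lam) α a v) = MGop t' (sq mu) β a (e v)))
      ↔ (lam = mu ∧ α = β ∧ t = t')) ∧
    (∀ mu' β' : ℂ, mu' ≠ 0 →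
      ¬ ∃ e : (Polynomial ℂ × Polynomial ℂ) ≃ₗ[ℂ] (Polynomial ℂ × Polynomial ℂ),
          GradedEquiv e ∧
          (∀ (m : ℤ) v, e (PiLop (sq lam) α m v) = MLop (sq mu') β' m (e v)) ∧
          (∀ a : ℤ, Odd a → ∀ v, e (PiIop t (sq lam) α a v) = MIop t' (sq mu') β' a (e v)) ∧
          (∀ (a : ℤ) v, e (PiGop t (sq lam) α a v) = MGop t' (sq mu') β' a (e v))) := by
  refine ⟨⟨fun ⟨e, he, hL, hI, hG⟩ => ?_, ?_⟩,
    fun _ _ _ ⟨e, he, _, _, hG⟩ => not_exists_gradedEquiv_map_PiGop_zero _ _ _ _ _ _ ⟨e, he, hG 0⟩⟩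
  · obtain ⟨c, hc, hec⟩ := he.exists_eq_smul_of_map_MGop_zero (hG 0)
    have hnu : sq lam ≠ 0 := fun h => hlam (by rw [← hsq lam, h, zero_pow two_ne_zero])
    obtain ⟨hsq_eq, rfl⟩ := eq_of_MLop_one_eq hnu <|
      eq_of_map_eq_of_apply_eq_smul hc hec (MLop_smul _ _ 1 c) (hL 1 (1, 0))
    obtain rfl : lam = mu := by rw [← hsq lam, ← hsq mu, hsq_eq]
    refine ⟨rfl, rfl, eq_of_MIop_one_eq (α := α) hnu ?_ ?_⟩ <;>
      exact eq_of_map_eq_of_apply_eq_smul hc hec (MIop_smul _ _ _ 1 c) (hI 1 odd_one _)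
  · rintro ⟨rfl, rfl, rfl⟩
    exact ⟨LinearEquiv.refl ℂ _, fun _ => ⟨rfl, rfl⟩, fun _ _ => rfl, fun _ _ _ => rfl,
      fun _ _ => rfl⟩

theorem stmt11 (sq : ℂ → ℂ) (hsq : ∀ z : ℂ, (sq z) ^ 2 = z)
    (lam mu : ℂ) (hlam : lam ≠ 0) (hmu : mu ≠ 0) (α β : ℂ)
    (t t' : ℂ) (ht : t = 1 ∨ t = -1) (ht' : t' = 1 ∨ t' = -1) :
    ((∃ e : (Polynomial ℂ × Polynomial ℂ) ≃ₗ[ℂ] (Polynomial ℂ × Polynomial ℂ),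
        GradedEquiv e ∧
        (∀ (m : ℤ) v, e (MLop (sq lam) α m v) = MLop (sq mu) β m (e v)) ∧
        (∀ a : ℤ, Odd a → ∀ v, e (MIop t (sq lam) α a v) = MIop t' (sq mu) β a (e v)) ∧
        (∀ (a : ℤ) v, e (MGop t (sq lam) α a v) = MGop t' (sq mu) β a (e v)))
      ↔ (lam = mu ∧ α = β ∧ t = t')) ∧
    (∀ mu' β' : ℂ, mu' ≠ 0 →
      ¬ ∃ e : (Polynomial ℂ × Polynomial ℂ) ≃ₗ[ℂ] (Polynomial ℂ × Polynomial ℂ),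
          GradedEquiv e ∧
          (∀ (m : ℤ) v, e (PiLop (sq lam) α m v) = MLop (sq mu') β' m (e v)) ∧
          (∀ a : ℤ, Odd a → ∀ v, e (PiIop t (sq lam) α a v) = MIop t' (sq mu') β' a (e v)) ∧
          (∀ (a : ℤ) v, e (PiGop t (sq lam) α a v) = MGop t' (sq mu') β' a (e v))) :=
  stmt11_general sq hsq lam mu hlam α β t t'
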